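/- Let α: U → V be a surjective h-transmission between supertropical monoids. If U is a semiring, then V is a semiring. -/

import Mathlib

universe u v w

class STM (U : Type u) extends CommMonoid U, Zero U where
  zero_mul' : ∀ x : U, 0 * x = 0
  e : U
  e_idem : e * e = e
  ghost_zero : ∀ x : U, e * x = 0 → x = 0
  le : U → U → Prop
  le_refl : ∀ x : U, le x x
  le_trans : ∀ x y z : U, le x y → le y z → le x z
  le_total : ∀ x y : U, le x y ∨ le y x
  le_antisymm : ∀ x y : U, e * x = x → e * y = y → le x y → le y x → x = y
  le_e : ∀ x y : U, le x y ↔ le (e * x) (e * y)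
  mul_le_mul : ∀ x y z : U, le x y → le (x * z) (y * z)
  zero_le : ∀ x : U, le 0 x

namespace STM

variable {U : Type u} [STM U]

/-- `x` is a ghost element, i.e. `x ∈ eU`. -/
def Ghost (x : U) : Prop := e * x = x

/-- strict inequality for the ordering of the ghost ideal -/
def slt (x y : U) : Prop := le x y ∧ ¬ le y x

open scoped Classical in
/-- the forced addition on a supertropical monoid -/
noncomputable def add (x y : U) : U :=
  if slt (e * x) (e * y) then y
  else if slt (e * y) (e * x) then x
  else e * x

/-- the supertropical monoid `U` "is" a (supertropical) semiring: the forced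
addition is associative and distributive. -/
def IsSemiring (U : Type u) [STM U] : Prop :=
  (∀ x y z : U, add (add x y) z = add x (add y z)) ∧
  (∀ x y z : U, add x y * z = add (x * z) (y * z))

end STM

open STM

/-- A transmission between supertropical monoids. -/
structure IsTransmission {U : Type u} {V : Type v} [STM U] [STM V] (α : U → V) : Prop where
  map_zero : α 0 = 0
  map_one : α 1 = 1
  map_mul : ∀ x y : U, α (x * y) = α x * α y
  map_e : α (STM.e : U) = (STM.e : V)
  mono : ∀ x y : U, Ghost x → Ghost y → STM.le x y → STM.le (α x) (α y)


/-- An h-transmission between supertropical monoids. -/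
def IsHTransmission {U : Type u} {V : Type v} [STM U] [STM V] (α : U → V) : Prop :=
  IsTransmission α ∧
  ∀ x y : U, slt (STM.e * x) (STM.e * y) → α (STM.e * x) = α (STM.e * y) → Ghost (α y)

/-! An h-transmission preserves the forced addition: in the tie case `e * x = e * y` both sums
are ghosts of equal images, and when `e * x < e * y` becomes a tie under `α`, the
h-condition makes `α y` ghost, so `add (α x) (α y) = e * α y = α y` as it must. Associativity
and distributivity then transfer along the surjective, multiplicative map `α`. -/

namespace STM

variable {U : Type u} [STM U]

lemma slt_irrefl (a : U) : ¬ slt a a := fun h => h.2 (STM.le_refl a)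

lemma ghost_e_mul (x : U) : Ghost (e * x) := by
  rw [Ghost, ← mul_assoc, e_idem]

lemma slt_or_eq_or_slt_of_ghost {a b : U} (ha : Ghost a) (hb : Ghost b) :
    slt a b ∨ a = b ∨ slt b a := by
  rcases STM.le_total a b with hab | hba
  · by_cases hba : STM.le b a
    · exact Or.inr (Or.inl (STM.le_antisymm a b ha hb hab hba))
    · exact Or.inl ⟨hab, hba⟩
  · by_cases hab : STM.le a b
    · exact Or.inr (Or.inl (STM.le_antisymm a b ha hb hab hba))
    · exact Or.inr (Or.inr ⟨hba, hab⟩)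

lemma add_of_slt {x y : U} (h : slt (e * x) (e * y)) : add x y = y := by
  rw [add, if_pos h]

lemma add_of_slt_swap {x y : U} (h : slt (e * y) (e * x)) : add x y = x := by
  rw [add, if_neg fun h' => h.2 h'.1, if_pos h]

lemma add_of_e_mul_eq {x y : U} (h : e * x = e * y) : add x y = e * x := by
  rw [add, h, if_neg (slt_irrefl _), if_neg (slt_irrefl _)]

protected lemma add_comm (x y : U) : add x y = add y x := by
  rcases slt_or_eq_or_slt_of_ghost (ghost_e_mul x) (ghost_e_mul y) with h | h | h
  · rw [add_of_slt h, add_of_slt_swap h]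
  · rw [add_of_e_mul_eq h, add_of_e_mul_eq h.symm, h]
  · rw [add_of_slt_swap h, add_of_slt h]

lemma add_eq_right_of_le {x y : U} (hle : STM.le (e * x) (e * y))
    (hy : e * x = e * y → Ghost y) : add x y = y := by
  rcases slt_or_eq_or_slt_of_ghost (ghost_e_mul x) (ghost_e_mul y) with h | h | h
  · exact add_of_slt h
  · rw [add_of_e_mul_eq h, h, hy h]
  · exact absurd hle h.2

lemma IsSemiring.of_surjective {V : Type v} [STM V] (hU : IsSemiring U) (f : U → V)
    (hf : Function.Surjective f) (map_add : ∀ x y, f (add x y) = add (f x) (f y))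
    (map_mul : ∀ x y, f (x * y) = f x * f y) : IsSemiring V := by
  constructor
  · intro a b c
    obtain ⟨x, rfl⟩ := hf a
    obtain ⟨y, rfl⟩ := hf b
    obtain ⟨z, rfl⟩ := hf c
    rw [← map_add, ← map_add, ← map_add, ← map_add, hU.1]
  · intro a b c
    obtain ⟨x, rfl⟩ := hf a
    obtain ⟨y, rfl⟩ := hf b
    obtain ⟨z, rfl⟩ := hf c
    rw [← map_add, ← map_mul, ← map_mul, ← map_mul, hU.2, map_add]

end STM

section Transmission

variable {U : Type u} {V : Type v} [STM U] [STM V] {α : U → V}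

lemma IsTransmission.map_e_mul (hα : IsTransmission α) (x : U) : α (e * x) = e * α x := by
  rw [hα.map_mul, hα.map_e]

lemma IsHTransmission.map_add_of_slt (hα : IsHTransmission α) {x y : U}
    (h : slt (e * x) (e * y)) : α (add x y) = add (α x) (α y) := by
  rw [add_of_slt h, add_eq_right_of_le]
  · rw [← hα.1.map_e_mul, ← hα.1.map_e_mul]
    exact hα.1.mono _ _ (ghost_e_mul x) (ghost_e_mul y) h.1
  · intro heq
    exact hα.2 x y h (by rwa [hα.1.map_e_mul, hα.1.map_e_mul])

lemma IsHTransmission.map_add (hα : IsHTransmission α) (x y : U) :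
    α (add x y) = add (α x) (α y) := by
  rcases slt_or_eq_or_slt_of_ghost (ghost_e_mul x) (ghost_e_mul y) with h | h | h
  · exact hα.map_add_of_slt h
  · have hα_eq : e * α x = e * α y := by rw [← hα.1.map_e_mul, h, hα.1.map_e_mul]
    rw [add_of_e_mul_eq h, add_of_e_mul_eq hα_eq, hα.1.map_e_mul]
  · rw [STM.add_comm, hα.map_add_of_slt h, STM.add_comm]

end Transmission

/-- If `α : U → V` is a surjective h-transmission and `U` is a semiring, then `V` is a
semiring. -/
theorem semiring_of_surjective_hTransmission {U : Type u} {V : Type v} [STM U] [STM V]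
    (α : U → V) (hα : IsHTransmission α) (hsurj : Function.Surjective α)
    (hU : IsSemiring U) :
    IsSemiring V :=
  hU.of_surjective α hsurj hα.map_add hα.1.map_mul
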